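/- arXiv:2103.02254 — 4 statements merged into one kernel-verified Lean document; each statement's English description precedes it below -/
import Mathlib

section
/- Let M ≥ 1 and N ≥ 1 be integers, α > 2/M a real number, a_{j,k} := j + ik for (j,k) ∈ ℤ_N² := {(j,k) ∈ ℤ² : |j| ≥ N, |k| ≥ N}, and let 0 < b_{j,k} ≤ |a_{j,k}|^{-α} be real numbers with ∑_{(j,k) ∈ ℤ_N²} |a_{j,k}|^{-αM} ≤ 2^{-(M+1)}. Then the series f(z) = ∑_{(j,k) ∈ ℤ_N²} (b_{j,k}/(z − a_{j,k}))^M converges locally uniformly on ℂ ∖ {a_{j,k} : (j,k) ∈ ℤ_N²} and defines a transcendental meromorphic function on ℂ whose set of poles is exactly {a_{j,k} : (j,k) ∈ ℤ_N²}, each pole having order M; every finite critical value and every finite asymptotic value of f lies in the closed disk of radius 2 centered at 0 (so f is of class B), and ∞ is not an asymptotic value of f. -/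
/-!
The poles are `1`-separated and `∑ b_p ^ M ≤ 2^{-(M+1)}`, so at distance `≥ 1/2` from every pole
each term is at most `2^M b_p^M` and `|f| ≤ 1/2`. On the disk `D(a_p, 1/2)`, `f` is the principal
part `(b_p / (z - a_p))^M` plus the sum over the other poles, which is bounded by `1/2` and has
derivative bounded by `M`. At a critical point `c` in that disk the derivative `M b_p^M / r^(M+1)`
of the principal part (`r = |c - a_p|`) is therefore at most `M`, which with `b_p ≤ 1` gives
`b_p ≤ r`, hence `|f(c)| ≤ 1 + 1/2`. A curve tending to `∞` cannot remain in the union of the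
pairwise disjoint open disks `D(a_p, 1/2)`, since by connectedness it would remain in one of them;
so it returns infinitely often to the region where `|f| ≤ 1/2`, and every asymptotic value on the
sphere lies in the closed disk of radius `1/2`.
-/

open Filter Topology Set Metric
open scoped ENNReal

noncomputable section

namespace Paper

/-- Riemann sphere as one-point compactification of ℂ. -/
local notation "ℂ∞" => OnePoint ℂ

open Classical in
/-- The self-map of the Riemann sphere induced by `f : ℂ → ℂ` with pole set `P`:
poles and `∞` are sent to `∞`. -/
def sphereMap (f : ℂ → ℂ) (P : Set ℂ) : ℂ∞ → ℂ∞ :=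
  fun z => Option.elim' OnePoint.infty
    (fun w => if w ∈ P then OnePoint.infty else ((f w : ℂ) : ℂ∞)) z

/-- The "norm" on the Riemann sphere, valued in `ℝ≥0∞`, with `∞ ↦ ⊤`. -/
def sphNorm : ℂ∞ → ℝ≥0∞ :=
  fun z => Option.elim' ⊤ (fun w : ℂ => (‖w‖₊ : ℝ≥0∞)) z

/-- The escaping set `I(f)` of the sphere map `F`. -/
def escapingSet (F : ℂ∞ → ℂ∞) : Set ℂ :=
  {z : ℂ | Tendsto (fun n : ℕ => F^[n] (z : ℂ∞)) atTop (𝓝 (OnePoint.infty))}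

/-- The set `I_R(f) = {z : liminf |F^n(z)| ≥ R}`. -/
def escapingSetGe (F : ℂ∞ → ℂ∞) (R : ℝ) : Set ℂ :=
  {z : ℂ | ENNReal.ofReal R ≤ Filter.liminf (fun n : ℕ => sphNorm (F^[n] (z : ℂ∞))) atTop}

/-- The finite critical values of `f`. -/
def critValues (f : ℂ → ℂ) : Set ℂ :=
  {w : ℂ | ∃ c : ℂ, AnalyticAt ℂ f c ∧ deriv f c = 0 ∧ f c = w}

/-- Asymptotic values (on the sphere) of the sphere map `F`. -/
def asymValues (F : ℂ∞ → ℂ∞) : Set ℂ∞ :=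
  {w : ℂ∞ | ∃ γ : ℝ → ℂ, Continuous γ ∧ Tendsto (fun t => ‖γ t‖) atTop atTop ∧
    Tendsto (fun t => F ((γ t : ℂ) : ℂ∞)) atTop (𝓝 w)}

/-- The singular set `S(f)`: finite critical values and finite asymptotic values. -/
def singularSet (f : ℂ → ℂ) (P : Set ℂ) : Set ℂ :=
  critValues f ∪ {w : ℂ | ((w : ℂ) : ℂ∞) ∈ asymValues (sphereMap f P)}

/-- `f` is of class `B`: bounded singular set. -/
def ClassB (f : ℂ → ℂ) (P : Set ℂ) : Prop :=
  Bornology.IsBounded (singularSet f P)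

/-- `∞` is not an asymptotic value of `f`. -/
def InftyNotAsym (f : ℂ → ℂ) (P : Set ℂ) : Prop :=
  OnePoint.infty ∉ asymValues (sphereMap f P)

/-- `f` is a meromorphic function on `ℂ` whose poles are exactly the (injectively enumerated)
points `a j`, the pole `a j` having order `m j ≥ 1` and coefficient `b j ≠ 0`,
i.e. `(z - a j) ^ (m j) * f z → (b j) ^ (m j)` as `z → a j`.  Since there are infinitely many
poles, any such `f` is transcendental. -/
structure MeroData (f : ℂ → ℂ) (a : ℕ → ℂ) (m : ℕ → ℕ) (b : ℕ → ℂ) : Prop where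
  inj : Function.Injective a
  analyticOff : ∀ z ∉ Set.range a, AnalyticAt ℂ f z
  mpos : ∀ j, 1 ≤ m j
  bne : ∀ j, b j ≠ 0
  blim : ∀ j, Tendsto (fun z : ℂ => (z - a j) ^ (m j) * f z) (𝓝[≠] (a j)) (𝓝 ((b j) ^ (m j)))

/-- The critical exponent of the series `∑_j (c j) ^ t`: the infimum of the set of `t ≥ 0`
for which the series converges (`∞` if this set is empty). -/
def critExp {ι : Type*} (c : ι → ℝ) : ℝ≥0∞ :=
  sInf (ENNReal.ofReal '' {t : ℝ | 0 ≤ t ∧ Summable (fun j : ι => c j ^ t)})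

/-- The component `U_j(R)` of `f⁻¹({|w| > R})` containing the pole `p`. -/
def poleComponent (f : ℂ → ℂ) (P : Set ℂ) (R : ℝ) (p : ℂ) : Set ℂ :=
  connectedComponentIn {z : ℂ | ENNReal.ofReal R < sphNorm (sphereMap f P (z : ℂ∞))} p

/-- Points of the escaping set whose orbit eventually stays in `U ⊆ ℂ`. -/
def escapesThrough (f : ℂ → ℂ) (P : Set ℂ) (U : Set ℂ) : Set ℂ :=
  {z ∈ escapingSet (sphereMap f P) |
    ∃ N : ℕ, 1 ≤ N ∧ ∀ n ≥ N, ∃ w ∈ U, (sphereMap f P)^[n] (z : ℂ∞) = ((w : ℂ) : ℂ∞)}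

end Paper

namespace Paper

/-- Index set `ℤ_N² = {(j,k) : |j|,|k| ≥ N}`. -/
def ZN (N : ℕ) : Type := {p : ℤ × ℤ // N ≤ p.1.natAbs ∧ N ≤ p.2.natAbs}

/-- The lattice point `a_{j,k} = j + i k`. -/
def latA {N : ℕ} (p : ZN N) : ℂ := (p.1.1 : ℂ) + (p.1.2 : ℂ) * Complex.I

/-- The set of poles `{a_{j,k}}`. -/
def latPoles (N : ℕ) : Set ℂ := Set.range (latA (N := N))

/-- The function `f(z) = ∑_{(j,k) ∈ ℤ_N²} (b_{j,k}/(z - a_{j,k}))^M`. -/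
def latF (N M : ℕ) (bc : ZN N → ℝ) (z : ℂ) : ℂ :=
  ∑' p : ZN N, ((bc p : ℂ) / (z - latA p)) ^ M

end Paper

namespace Paper

section PoleSums

variable {ι : Type*} {a : ι → ℂ} {b : ι → ℝ} {M : ℕ}

structure SparsePoles (a : ι → ℂ) (b : ι → ℝ) (M : ℕ) : Prop where
  one_le_norm_sub : Pairwise fun p q => 1 ≤ ‖a p - a q‖
  pos : ∀ p, 0 < b p
  summable : Summable fun p => b p ^ M
  tsum_le : ∑' p, b p ^ M ≤ 1 / 2 ^ (M + 1)

def poleSum (a : ι → ℂ) (b : ι → ℝ) (M : ℕ) (z : ℂ) : ℂ :=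
  ∑' p, ((b p : ℂ) / (z - a p)) ^ M

def poleSumCompl (a : ι → ℂ) (b : ι → ℝ) (M : ℕ) (p : ι) : ℂ → ℂ :=
  poleSum (fun q : ({p}ᶜ : Set ι) => a q) (fun q => b q) M

theorem sphereMap_coe_of_notMem {f : ℂ → ℂ} {P : Set ℂ} {z : ℂ} (hz : z ∉ P) :
    sphereMap f P z = f z := by
  rw [sphereMap, show (z : OnePoint ℂ) = Option.some z from rfl, Option.elim'_some, if_neg hz]

theorem norm_ofReal_div_pow_le {β δ : ℝ} (hβ : 0 ≤ β) (hδ : 0 < δ) {w : ℂ} (hw : δ ≤ ‖w‖) :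
    ‖((β : ℂ) / w) ^ M‖ ≤ β ^ M / δ ^ M := by
  rw [norm_pow, norm_div, Complex.norm_of_nonneg hβ, div_pow]
  gcongr

theorem norm_ofReal_div_pow_le_two_pow {β : ℝ} (hβ : 0 ≤ β) {w : ℂ} (hw : 1 / 2 ≤ ‖w‖) :
    ‖((β : ℂ) / w) ^ M‖ ≤ β ^ M * 2 ^ M := calc
  _ ≤ β ^ M / (1 / 2) ^ M := norm_ofReal_div_pow_le hβ (by norm_num) hw
  _ = β ^ M * 2 ^ M := by rw [one_div, inv_pow, div_inv_eq_mul]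

theorem norm_deriv_ofReal_div_sub_pow {β : ℝ} (hβ : 0 ≤ β) {x z : ℂ} (hz : z ≠ x) :
    ‖deriv (fun w => ((β : ℂ) / (w - x)) ^ M) z‖ = M * β ^ M / ‖z - x‖ ^ (M + 1) := by
  have hzx : z - x ≠ 0 := sub_ne_zero.2 hz
  have hfun : (fun w => ((β : ℂ) / (w - x)) ^ M) =
      fun w => (β : ℂ) ^ M * (w - x) ^ (-(M : ℤ)) := by
    funext w
    rw [div_pow, div_eq_mul_inv, ← zpow_natCast (w - x), ← zpow_neg]
  have hderiv : HasDerivAt (fun w => (β : ℂ) ^ M * (w - x) ^ (-(M : ℤ)))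
      ((β : ℂ) ^ M * ((-(M : ℤ) : ℂ) * (z - x) ^ (-(M : ℤ) - 1))) z := by
    have := (hasDerivAt_zpow (-(M : ℤ)) (z - x) (Or.inl hzx)).comp z
      ((hasDerivAt_id z).sub_const x)
    simpa using this.const_mul ((β : ℂ) ^ M)
  have hexp : -(M : ℤ) - 1 = -((M + 1 : ℕ) : ℤ) := by push_cast; ring
  rw [hfun, hderiv.deriv, norm_mul, norm_mul, norm_pow, Complex.norm_of_nonneg hβ, hexp,
    norm_zpow, zpow_neg, zpow_natCast]
  simp only [Int.cast_natCast, norm_neg, Complex.norm_natCast]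
  ring

theorem differentiableAt_ofReal_div_sub_pow (β : ℝ) {x z : ℂ} (hz : z ≠ x) :
    DifferentiableAt ℂ (fun w => ((β : ℂ) / (w - x)) ^ M) z := by
  have hzx : z - x ≠ 0 := sub_ne_zero.2 hz
  fun_prop (disch := exact hzx)

theorem tendsto_sub_pow_mul_zero {f : ℂ → ℂ} {x L : ℂ} (hM : M ≠ 0)
    (hf : Tendsto f (𝓝[≠] x) (𝓝 L)) :
    Tendsto (fun z => (z - x) ^ M * f z) (𝓝[≠] x) (𝓝 0) := by
  have hpow : Tendsto (fun z => (z - x) ^ M) (𝓝[≠] x) (𝓝 0) :=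
    (((continuous_id.sub continuous_const).pow M).tendsto' x 0 (by simp [hM])).mono_left
      nhdsWithin_le_nhds
  simpa using hpow.mul hf

namespace SparsePoles

variable (h : SparsePoles a b M)
include h

theorem injective : Function.Injective a := fun _ _ hpq =>
  by_contra fun hne => norm_sub_pos_iff.1 (one_pos.trans_le (h.one_le_norm_sub hne)) hpq

theorem isClosed_range : IsClosed (range a) := by
  refine isClosed_of_pairwise_le_dist one_pos ?_
  rintro _ ⟨p, rfl⟩ _ ⟨q, rfl⟩ hne
  rw [dist_eq_norm]
  exact h.one_le_norm_sub fun hpq => hne (congrArg a hpq)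

theorem le_one (hM : M ≠ 0) (p : ι) : b p ≤ 1 := by
  have hp : b p ^ M ≤ 1 := calc
    b p ^ M ≤ ∑' q, b q ^ M := h.summable.le_tsum p fun q _ => pow_nonneg (h.pos q).le M
    _ ≤ 1 / 2 ^ (M + 1) := h.tsum_le
    _ ≤ 1 := by rw [div_le_one (by positivity)]; exact one_le_pow₀ one_le_two
  exact (pow_le_one_iff_of_nonneg (h.pos p).le hM).1 hp

theorem norm_tsum_le {g : ι → ℂ} {C : ℝ} (hC : 0 ≤ C) (hg : ∀ p, ‖g p‖ ≤ b p ^ M * C) :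
    ‖∑' p, g p‖ ≤ C / 2 ^ (M + 1) := calc
  ‖∑' p, g p‖ ≤ (∑' p, b p ^ M) * C := tsum_of_norm_bounded (h.summable.hasSum.mul_right C) hg
  _ ≤ 1 / 2 ^ (M + 1) * C := by gcongr; exact h.tsum_le
  _ = C / 2 ^ (M + 1) := by ring

theorem summable_of_le_norm_sub {δ : ℝ} (hδ : 0 < δ) {z : ℂ} (hz : ∀ p, δ ≤ ‖z - a p‖) :
    Summable fun p => ((b p : ℂ) / (z - a p)) ^ M :=
  (h.summable.div_const (δ ^ M)).of_norm_bounded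
    fun p => norm_ofReal_div_pow_le (h.pos p).le hδ (hz p)

theorem exists_ball_le_norm_sub {z : ℂ} (hz : z ∉ range a) :
    ∃ δ > 0, ∀ y ∈ ball z δ, ∀ p, δ ≤ ‖y - a p‖ := by
  obtain ⟨ε, hε, hball⟩ := Metric.isOpen_iff.1 h.isClosed_range.isOpen_compl z hz
  refine ⟨ε / 2, half_pos hε, fun y hy p => ?_⟩
  have hp : ε ≤ ‖z - a p‖ := by
    by_contra! hlt
    exact hball (mem_ball_iff_norm.2 (by rwa [norm_sub_rev])) ⟨p, rfl⟩
  have hy' : ‖y - z‖ < ε / 2 := mem_ball_iff_norm.1 hy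
  calc ε / 2 ≤ ‖z - a p‖ - ‖y - z‖ := by linarith
    _ ≤ ‖y - a p‖ := by
      have := norm_sub_le_norm_sub_add_norm_sub z y (a p)
      rw [norm_sub_rev z y] at this
      linarith

theorem tendstoLocallyUniformlyOn :
    TendstoLocallyUniformlyOn
      (fun (s : Finset ι) (z : ℂ) => ∑ p ∈ s, ((b p : ℂ) / (z - a p)) ^ M)
      (poleSum a b M) atTop (range a)ᶜ := by
  refine tendstoLocallyUniformlyOn_of_forall_exists_nhds fun z hz => ?_
  obtain ⟨δ, hδ, hfar⟩ := h.exists_ball_le_norm_sub hz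
  exact ⟨ball z δ, mem_nhdsWithin_of_mem_nhds (ball_mem_nhds z hδ),
    tendstoUniformlyOn_tsum (h.summable.div_const (δ ^ M))
      fun p y hy => norm_ofReal_div_pow_le (h.pos p).le hδ (hfar y hy p)⟩

theorem differentiableOn : DifferentiableOn ℂ (poleSum a b M) (range a)ᶜ := by
  refine h.tendstoLocallyUniformlyOn.differentiableOn (Eventually.of_forall fun s => ?_)
    h.isClosed_range.isOpen_compl
  exact DifferentiableOn.fun_sum fun p _ z hz =>
    (differentiableAt_ofReal_div_sub_pow _ fun hzp => hz ⟨p, hzp.symm⟩).differentiableWithinAt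

theorem analyticAt {z : ℂ} (hz : z ∉ range a) : AnalyticAt ℂ (poleSum a b M) z :=
  h.differentiableOn.analyticAt (h.isClosed_range.isOpen_compl.mem_nhds hz)

theorem norm_poleSum_le_half {z : ℂ} (hz : ∀ p, 1 / 2 ≤ ‖z - a p‖) :
    ‖poleSum a b M z‖ ≤ 1 / 2 := calc
  ‖poleSum a b M z‖ ≤ 2 ^ M / 2 ^ (M + 1) := h.norm_tsum_le (by positivity) fun p =>
    norm_ofReal_div_pow_le_two_pow (h.pos p).le (hz p)
  _ = 1 / 2 := by rw [pow_succ]; field_simp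

theorem norm_deriv_poleSum_le {U : Set ℂ} (hU : IsOpen U)
    (hfar : ∀ z ∈ U, ∀ p, 1 / 2 ≤ ‖z - a p‖) {c : ℂ} (hc : c ∈ U) :
    ‖deriv (poleSum a b M) c‖ ≤ M := by
  have hne : ∀ z ∈ U, ∀ p, z ≠ a p := fun z hz p =>
    norm_sub_pos_iff.1 (one_half_pos.trans_le (hfar z hz p))
  have hsum := Complex.hasSum_deriv_of_summable_norm (h.summable.mul_right (2 ^ M))
    (fun p z hz => (differentiableAt_ofReal_div_sub_pow (b p) (hne z hz p)).differentiableWithinAt)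
    hU (fun p z hz => norm_ofReal_div_pow_le_two_pow (h.pos p).le (hfar z hz p)) hc
  have hderiv : deriv (poleSum a b M) c =
      ∑' p, deriv (fun w => ((b p : ℂ) / (w - a p)) ^ M) c :=
    hsum.tsum_eq.symm
  calc ‖deriv (poleSum a b M) c‖ ≤ M * 2 ^ (M + 1) / 2 ^ (M + 1) := by
        rw [hderiv]
        refine h.norm_tsum_le (by positivity) fun p => ?_
        rw [norm_deriv_ofReal_div_sub_pow (h.pos p).le (hne c hc p)]
        calc (M : ℝ) * b p ^ M / ‖c - a p‖ ^ (M + 1) ≤ M * b p ^ M / (1 / 2) ^ (M + 1) := by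
              gcongr
              · exact mul_nonneg (Nat.cast_nonneg M) (pow_nonneg (h.pos p).le M)
              · exact hfar c hc p
          _ = b p ^ M * (M * 2 ^ (M + 1)) := by rw [one_div, inv_pow, div_inv_eq_mul]; ring
    _ = M := by field_simp

theorem compl (p : ι) : SparsePoles (fun q : ({p}ᶜ : Set ι) => a q) (fun q => b q) M where
  one_le_norm_sub _ _ hqr := h.one_le_norm_sub (Subtype.coe_injective.ne hqr)
  pos q := h.pos q
  summable := h.summable.subtype _
  tsum_le := ((h.summable.tsum_subtype_le _ {p}ᶜ fun q => pow_nonneg (h.pos q).le M)).trans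
    h.tsum_le

theorem poleSum_eq_add_poleSumCompl {z : ℂ} (hz : z ∉ range a) (p : ι) :
    poleSum a b M z = ((b p : ℂ) / (z - a p)) ^ M + poleSumCompl a b M p z := by
  obtain ⟨δ, hδ, hfar⟩ := h.exists_ball_le_norm_sub hz
  have hsum := h.summable_of_le_norm_sub hδ (hfar z (mem_ball_self hδ))
  rw [poleSum, ← hsum.tsum_subtype_add_tsum_subtype_compl {p},
    tsum_singleton p fun q => ((b q : ℂ) / (z - a q)) ^ M]
  rfl

theorem half_le_norm_sub_of_mem_ball {p : ι} {z : ℂ} (hz : z ∈ ball (a p) (1 / 2))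
    (q : ({p}ᶜ : Set ι)) : 1 / 2 ≤ ‖z - a q‖ := by
  have hpq := h.one_le_norm_sub (Ne.symm q.2)
  have hzp : ‖a p - z‖ < 1 / 2 := by rwa [norm_sub_rev, ← mem_ball_iff_norm]
  linarith [norm_sub_le_norm_sub_add_norm_sub (a p) z (a q)]

theorem notMem_range_compl {p : ι} {z : ℂ} (hz : z ∈ ball (a p) (1 / 2)) :
    z ∉ range fun q : ({p}ᶜ : Set ι) => a q := fun ⟨q, hq⟩ =>
  norm_sub_pos_iff.1 (one_half_pos.trans_le (h.half_le_norm_sub_of_mem_ball hz q)) hq.symm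

theorem notMem_range_of_mem_ball {p : ι} {z : ℂ} (hz : z ∈ ball (a p) (1 / 2))
    (hne : z ≠ a p) : z ∉ range a := fun ⟨q, hq⟩ => by
  have hqp : q ≠ p := fun hqp => hne (hqp ▸ hq.symm)
  exact h.notMem_range_compl hz ⟨⟨q, hqp⟩, hq⟩

theorem tendsto_sub_pow_mul_poleSum (hM : M ≠ 0) (p : ι) :
    Tendsto (fun z => (z - a p) ^ M * poleSum a b M z) (𝓝[≠] a p) (𝓝 ((b p : ℂ) ^ M)) := by
  have hball : ball (a p) (1 / 2) ∈ 𝓝[≠] a p :=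
    mem_nhdsWithin_of_mem_nhds (ball_mem_nhds _ (by norm_num))
  have hrem := tendsto_sub_pow_mul_zero hM
    (((h.compl p).analyticAt (h.notMem_range_compl (mem_ball_self (by norm_num)))).continuousAt
      |>.tendsto.mono_left nhdsWithin_le_nhds)
  rw [← add_zero ((b p : ℂ) ^ M)]
  refine (hrem.const_add _).congr' ?_
  filter_upwards [hball, self_mem_nhdsWithin] with z hz hne
  rw [h.poleSum_eq_add_poleSumCompl (h.notMem_range_of_mem_ball hz hne) p, mul_add, ← mul_pow,
    mul_div_cancel₀ _ (sub_ne_zero.2 hne)]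
  rfl

theorem not_tendsto_poleSum (hM : M ≠ 0) (p : ι) (L : ℂ) :
    ¬ Tendsto (poleSum a b M) (𝓝[≠] a p) (𝓝 L) := fun hL =>
  pow_ne_zero M (Complex.ofReal_ne_zero.2 (h.pos p).ne')
    (tendsto_nhds_unique (h.tendsto_sub_pow_mul_poleSum hM p) (tendsto_sub_pow_mul_zero hM hL))

theorem not_exists_eq_div_polynomial [Infinite ι] (hM : M ≠ 0) :
    ¬ ∃ P Q : Polynomial ℂ, Q ≠ 0 ∧
      ∀ z : ℂ, Q.eval z ≠ 0 → poleSum a b M z = P.eval z / Q.eval z := by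
  rintro ⟨P, Q, hQ, hPQ⟩
  obtain ⟨p, hp⟩ : ∃ p, Q.eval (a p) ≠ 0 := by
    by_contra! hroots
    refine Set.infinite_range_of_injective h.injective
      ((Polynomial.finite_setOfPred_isRoot hQ).subset ?_)
    rintro _ ⟨p, rfl⟩
    exact hroots p
  have hcont : ContinuousAt (fun z => P.eval z / Q.eval z) (a p) :=
    P.continuousAt.div Q.continuousAt hp
  refine h.not_tendsto_poleSum hM p _ ((hcont.tendsto.mono_left nhdsWithin_le_nhds).congr' ?_)
  filter_upwards [mem_nhdsWithin_of_mem_nhds (Q.continuousAt.eventually_ne hp)] with z hz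
  exact (hPQ z hz).symm

theorem le_norm_sub_of_deriv_eq_zero (hM : M ≠ 0) {p : ι} {c : ℂ} (hc : c ∈ ball (a p) (1 / 2))
    (hne : c ≠ a p) (hd : deriv (poleSum a b M) c = 0) : b p ≤ ‖c - a p‖ := by
  set T := fun w => ((b p : ℂ) / (w - a p)) ^ M
  have hdecomp : poleSum a b M =ᶠ[𝓝 c] T + poleSumCompl a b M p := by
    filter_upwards [(isOpen_ball.sdiff isClosed_singleton).mem_nhds ⟨hc, hne⟩] with z hz
    exact h.poleSum_eq_add_poleSumCompl (h.notMem_range_of_mem_ball hz.1 hz.2) p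
  have hTc : DifferentiableAt ℂ T c := differentiableAt_ofReal_div_sub_pow _ hne
  have hRc : DifferentiableAt ℂ (poleSumCompl a b M p) c :=
    ((h.compl p).analyticAt (h.notMem_range_compl hc)).differentiableAt
  rw [hdecomp.deriv_eq, deriv_add hTc hRc] at hd
  have hT : ‖deriv T c‖ ≤ M := by
    rw [eq_neg_of_add_eq_zero_left hd, norm_neg]
    exact (h.compl p).norm_deriv_poleSum_le isOpen_ball
      (fun z hz q => h.half_le_norm_sub_of_mem_ball hz q) hc
  have hr : 0 < ‖c - a p‖ := norm_pos_iff.2 (sub_ne_zero.2 hne)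
  rw [norm_deriv_ofReal_div_sub_pow (h.pos p).le hne, mul_div_assoc,
    mul_le_iff_le_one_right (Nat.cast_pos.2 (Nat.pos_of_ne_zero hM)),
    div_le_one (pow_pos hr _)] at hT
  refine le_of_pow_le_pow_left₀ (Nat.succ_ne_zero M) hr.le ?_
  calc b p ^ (M + 1) ≤ b p ^ M := pow_le_pow_of_le_one (h.pos p).le (h.le_one hM p) M.le_succ
    _ ≤ ‖c - a p‖ ^ (M + 1) := hT

theorem norm_poleSum_le_two_of_deriv_eq_zero (hM : M ≠ 0) {c : ℂ}
    (hc : AnalyticAt ℂ (poleSum a b M) c) (hd : deriv (poleSum a b M) c = 0) :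
    ‖poleSum a b M c‖ ≤ 2 := by
  by_cases hfar : ∀ p, 1 / 2 ≤ ‖c - a p‖
  · linarith [h.norm_poleSum_le_half hfar]
  simp only [not_forall, not_le] at hfar
  obtain ⟨p, hp⟩ := hfar
  have hcp : c ∈ ball (a p) (1 / 2) := mem_ball_iff_norm.2 hp
  have hne : c ≠ a p := by
    rintro rfl
    exact h.not_tendsto_poleSum hM p _ (hc.continuousAt.tendsto.mono_left nhdsWithin_le_nhds)
  have hprincipal : ‖((b p : ℂ) / (c - a p)) ^ M‖ ≤ 1 := calc
    _ ≤ b p ^ M / b p ^ M := norm_ofReal_div_pow_le (h.pos p).le (h.pos p)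
        (h.le_norm_sub_of_deriv_eq_zero hM hcp hne hd)
    _ = 1 := div_self (pow_ne_zero _ (h.pos p).ne')
  rw [h.poleSum_eq_add_poleSumCompl (h.notMem_range_of_mem_ball hcp hne) p]
  calc _ ≤ ‖((b p : ℂ) / (c - a p)) ^ M‖ + ‖poleSumCompl a b M p c‖ := norm_add_le _ _
    _ ≤ 1 + 1 / 2 := add_le_add hprincipal
        ((h.compl p).norm_poleSum_le_half (h.half_le_norm_sub_of_mem_ball hcp))
    _ ≤ 2 := by norm_num

theorem subset_ball_of_isPreconnected {S : Set ℂ} (hS : IsPreconnected S)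
    (hcover : ∀ z ∈ S, ∃ q, z ∈ ball (a q) (1 / 2)) {p : ι} {z : ℂ} (hz : z ∈ S)
    (hzp : z ∈ ball (a p) (1 / 2)) : S ⊆ ball (a p) (1 / 2) := by
  refine hS.subset_left_of_subset_union (v := ⋃ q : ({p}ᶜ : Set ι), ball (a q) (1 / 2))
    isOpen_ball (isOpen_iUnion fun _ => isOpen_ball) ?_ ?_ ⟨z, hz, hzp⟩
  · refine Set.disjoint_left.2 fun w hw hw' => ?_
    obtain ⟨q, hq⟩ := Set.mem_iUnion.1 hw'
    exact (h.half_le_norm_sub_of_mem_ball hw q).not_gt (mem_ball_iff_norm.1 hq)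
  · intro w hw
    obtain ⟨q, hq⟩ := hcover w hw
    by_cases hqp : q = p
    · exact Or.inl (hqp ▸ hq)
    · exact Or.inr (Set.mem_iUnion.2 ⟨⟨q, hqp⟩, hq⟩)

theorem frequently_half_le_norm_sub {γ : ℝ → ℂ} (hγ : Continuous γ)
    (hγ' : Tendsto (fun t => ‖γ t‖) atTop atTop) :
    ∃ᶠ t in atTop, ∀ p, 1 / 2 ≤ ‖γ t - a p‖ := by
  rw [frequently_atTop]
  intro T
  by_contra! hnear
  obtain ⟨p, hp⟩ := hnear T le_rfl
  have hsub : γ '' Ici T ⊆ ball (a p) (1 / 2) :=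
    h.subset_ball_of_isPreconnected (isPreconnected_Ici.image γ hγ.continuousOn)
      (by rintro _ ⟨t, ht, rfl⟩; simpa only [mem_ball_iff_norm] using hnear t ht)
      ⟨T, self_mem_Ici, rfl⟩ (mem_ball_iff_norm.2 hp)
  obtain ⟨t, htT, ht⟩ :=
    ((eventually_ge_atTop T).and (hγ'.eventually_gt_atTop (‖a p‖ + 1 / 2))).exists
  have hclose := mem_ball_iff_norm.1 (hsub ⟨t, htT, rfl⟩)
  linarith [norm_le_norm_add_norm_sub' (γ t) (a p)]

theorem asymValues_subset_closedBall :
    asymValues (sphereMap (poleSum a b M) (range a)) ⊆ (↑) '' closedBall (0 : ℂ) (1 / 2) := by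
  rintro w ⟨γ, hγ, hγ', hw⟩
  have hclosed : IsClosed (((↑) : ℂ → OnePoint ℂ) '' closedBall 0 (1 / 2)) :=
    ((isCompact_closedBall 0 _).image OnePoint.continuous_coe).isClosed
  refine hclosed.mem_of_frequently_of_tendsto
    ((h.frequently_half_le_norm_sub hγ hγ').mono fun t ht => ?_) hw
  have hγt : γ t ∉ range a := fun ⟨p, hp⟩ =>
    norm_sub_pos_iff.1 (one_half_pos.trans_le (ht p)) hp.symm
  rw [sphereMap_coe_of_notMem hγt]
  exact mem_image_of_mem _ (mem_closedBall_zero_iff.2 (h.norm_poleSum_le_half ht))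

end SparsePoles

end PoleSums

theorem one_le_norm_latA_sub {N : ℕ} {p q : ZN N} (hpq : p ≠ q) : 1 ≤ ‖latA p - latA q‖ := by
  have one_le_abs_cast {n : ℤ} (hn : n ≠ 0) : (1 : ℝ) ≤ |(n : ℝ)| := by
    exact_mod_cast Int.one_le_abs hn
  by_cases h1 : p.1.1 = q.1.1
  · have h2 : p.1.2 - q.1.2 ≠ 0 :=
      sub_ne_zero.2 fun h2 => hpq (Subtype.ext (Prod.ext h1 h2))
    calc (1 : ℝ) ≤ |((p.1.2 - q.1.2 : ℤ) : ℝ)| := one_le_abs_cast h2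
      _ = |(latA p - latA q).im| := by simp [latA]
      _ ≤ ‖latA p - latA q‖ := Complex.abs_im_le_norm _
  · calc (1 : ℝ) ≤ |((p.1.1 - q.1.1 : ℤ) : ℝ)| := one_le_abs_cast (sub_ne_zero.2 h1)
      _ = |(latA p - latA q).re| := by simp [latA]
      _ ≤ ‖latA p - latA q‖ := Complex.abs_re_le_norm _

instance (N : ℕ) : Infinite (ZN N) :=
  Infinite.of_injective (fun n : ℕ => (⟨(N + n, N + n), by omega, by omega⟩ : ZN N))
    fun m n hmn => by simpa using congrArg (fun p : ZN N => p.1.1) hmn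

theorem pow_le_rpow_neg_mul {β x α : ℝ} (M : ℕ) (hβ : 0 ≤ β) (hx : 0 ≤ x) (h : β ≤ x ^ (-α)) :
    β ^ M ≤ x ^ (-(α * M)) := calc
  β ^ M ≤ (x ^ (-α)) ^ M := pow_le_pow_left₀ hβ h M
  _ = x ^ (-(α * M)) := by rw [← Real.rpow_natCast, ← Real.rpow_mul hx, neg_mul]

theorem sparsePoles_latA {M N : ℕ} {α : ℝ} {bc : ZN N → ℝ}
    (hbc : ∀ p : ZN N, 0 < bc p ∧ bc p ≤ ‖latA p‖ ^ (-α))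
    (hsum : Summable (fun p : ZN N => ‖latA p‖ ^ (-(α * M))))
    (hbound : (∑' p : ZN N, ‖latA p‖ ^ (-(α * M))) ≤ 1 / 2 ^ (M + 1)) :
    SparsePoles latA bc M := by
  have hle (p : ZN N) : bc p ^ M ≤ ‖latA p‖ ^ (-(α * M)) :=
    pow_le_rpow_neg_mul M (hbc p).1.le (norm_nonneg _) (hbc p).2
  have hsummable : Summable fun p => bc p ^ M :=
    hsum.of_nonneg_of_le (fun p => pow_nonneg (hbc p).1.le M) hle
  exact ⟨fun _ _ => one_le_norm_latA_sub, fun p => (hbc p).1, hsummable,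
    (hsummable.tsum_le_tsum hle hsum).trans hbound⟩

theorem lattice_example_basic_general (M N : ℕ) (hM : 1 ≤ M) (α : ℝ)
    (bc : ZN N → ℝ)
    (hbc : ∀ p : ZN N, 0 < bc p ∧ bc p ≤ ‖latA p‖ ^ (-α))
    (hsum : Summable (fun p : ZN N => ‖latA p‖ ^ (-(α * M))))
    (hbound : (∑' p : ZN N, ‖latA p‖ ^ (-(α * M))) ≤ 1 / 2 ^ (M + 1)) :
    TendstoLocallyUniformlyOn
        (fun (s : Finset (ZN N)) (z : ℂ) => ∑ p ∈ s, ((bc p : ℂ) / (z - latA p)) ^ M)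
        (latF N M bc) atTop (latPoles N)ᶜ
      ∧ (∀ z ∉ latPoles N, AnalyticAt ℂ (latF N M bc) z)
      ∧ Function.Injective (latA (N := N))
      ∧ (∀ p : ZN N,
          Tendsto (fun z : ℂ => (z - latA p) ^ M * latF N M bc z) (𝓝[≠] (latA p))
            (𝓝 ((bc p : ℂ) ^ M)))
      ∧ (¬ ∃ P Q : Polynomial ℂ, Q ≠ 0 ∧
            ∀ z : ℂ, Q.eval z ≠ 0 → latF N M bc z = P.eval z / Q.eval z)
      ∧ singularSet (latF N M bc) (latPoles N) ⊆ Metric.closedBall 0 2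
      ∧ InftyNotAsym (latF N M bc) (latPoles N) := by
  have h : SparsePoles latA bc M := sparsePoles_latA hbc hsum hbound
  have hM : M ≠ 0 := by omega
  refine ⟨h.tendstoLocallyUniformlyOn, fun z => h.analyticAt, h.injective,
    h.tendsto_sub_pow_mul_poleSum hM, h.not_exists_eq_div_polynomial hM, ?_, fun hw => ?_⟩
  · rintro w (⟨c, hc, hd, rfl⟩ | hw)
    · exact mem_closedBall_zero_iff.2 (h.norm_poleSum_le_two_of_deriv_eq_zero hM hc hd)
    · obtain ⟨v, hv, hvw⟩ := h.asymValues_subset_closedBall hw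
      exact closedBall_subset_closedBall (by norm_num) (OnePoint.coe_injective hvw ▸ hv)
  · obtain ⟨v, -, hv⟩ := h.asymValues_subset_closedBall hw
    exact OnePoint.coe_ne_infty v hv

/-- **Theorem 7.1 (setup)**: under the stated conditions on `M, N, α` and the coefficients
`b_{j,k}`, the series defining `f` converges locally uniformly off the lattice points, defines a
transcendental meromorphic function whose poles are exactly the points `a_{j,k}`, each of order
`M`; all finite critical and asymptotic values of `f` lie in the closed disk of radius `2`,
so `f ∈ B`, and `∞` is not an asymptotic value of `f`. -/
theorem lattice_example_basic (M N : ℕ) (hM : 1 ≤ M) (hN : 1 ≤ N) (α : ℝ)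
    (hα : 2 / (M : ℝ) < α)
    (bc : ZN N → ℝ)
    (hbc : ∀ p : ZN N, 0 < bc p ∧ bc p ≤ ‖latA p‖ ^ (-α))
    (hsum : Summable (fun p : ZN N => ‖latA p‖ ^ (-(α * M))))
    (hbound : (∑' p : ZN N, ‖latA p‖ ^ (-(α * M))) ≤ 1 / 2 ^ (M + 1)) :
    TendstoLocallyUniformlyOn
        (fun (s : Finset (ZN N)) (z : ℂ) => ∑ p ∈ s, ((bc p : ℂ) / (z - latA p)) ^ M)
        (latF N M bc) atTop (latPoles N)ᶜ
      ∧ (∀ z ∉ latPoles N, AnalyticAt ℂ (latF N M bc) z)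
      ∧ Function.Injective (latA (N := N))
      ∧ (∀ p : ZN N,
          Tendsto (fun z : ℂ => (z - latA p) ^ M * latF N M bc z) (𝓝[≠] (latA p))
            (𝓝 ((bc p : ℂ) ^ M)))
      ∧ (¬ ∃ P Q : Polynomial ℂ, Q ≠ 0 ∧
            ∀ z : ℂ, Q.eval z ≠ 0 → latF N M bc z = P.eval z / Q.eval z)
      ∧ singularSet (latF N M bc) (latPoles N) ⊆ Metric.closedBall 0 2
      ∧ InftyNotAsym (latF N M bc) (latPoles N) :=
  lattice_example_basic_general M N hM α bc hbc hsum hbound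

end Paper
end
end

section
/- Let M ≥ 1 and N ≥ 1 be integers, α > 2/M, a_{j,k} := j + ik for (j,k) ∈ ℤ_N² := {(j,k) ∈ ℤ² : |j| ≥ N, |k| ≥ N}, and 0 < b_{j,k} ≤ |a_{j,k}|^{-α} with ∑_{(j,k) ∈ ℤ_N²} |a_{j,k}|^{-αM} ≤ 2^{-(M+1)}. If z ∈ ℂ does not belong to any of the disks D(a_{j,k}, b_{j,k}), (j,k) ∈ ℤ_N², then |f(z)| ≤ 2, where f(z) = ∑_{(j,k) ∈ ℤ_N²} (b_{j,k}/(z − a_{j,k}))^M. -/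
open Filter Topology Set Metric
open scoped ENNReal

noncomputable section

namespace Paper

/-- Riemann sphere as one-point compactification of ℂ. -/
local notation "ℂ∞" => OnePoint ℂ

end Paper

/-! Distinct lattice points are at distance at least `1`, so `z` is within `1/2` of at most one
pole `a`. That term is bounded by `1` because `z` lies outside `D(a, b)`; every other term has
`|z - a| ≥ 1/2` and is therefore at most `2^M |a|^{-αM}`, and these sum to at most `1/2`. -/

section

variable {ι E : Type*} [SeminormedAddCommGroup E]

theorem norm_tsum_le_tsum_add_one_of_subsingleton {f : ι → E} {c : ι → ℝ} {S : Set ι}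
    (hS : S.Subsingleton) (hc : Summable c) (hfS : ∀ i ∈ S, ‖f i‖ ≤ 1)
    (hfc : ∀ i ∉ S, ‖f i‖ ≤ c i) (hc0 : ∀ i, 0 ≤ c i) :
    ‖∑' i, f i‖ ≤ ∑' i, c i + 1 := by
  classical
  rcases hS.eq_empty_or_singleton with rfl | ⟨x, rfl⟩
  · have := tsum_of_norm_bounded hc.hasSum fun i => hfc i (Set.notMem_empty i)
    linarith
  · refine tsum_of_norm_bounded (hc.hasSum.add (hasSum_pi_single x 1)) fun i => ?_
    rcases eq_or_ne i x with rfl | hi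
    · simpa using (hfS i rfl).trans (le_add_of_nonneg_left (hc0 i))
    · simpa [Pi.single_apply, hi] using hfc i hi

end

theorem Metric.subsingleton_setOf_dist_lt_half {ι X : Type*} [PseudoMetricSpace X] {x : ι → X}
    {r : ℝ} (hx : Pairwise fun i j => r ≤ dist (x i) (x j)) (z : X) :
    {i | dist z (x i) < r / 2}.Subsingleton := by
  intro i hi j hj
  by_contra hij
  have := calc
    r ≤ dist (x i) (x j) := hx hij
    _ ≤ dist z (x i) + dist z (x j) := dist_triangle_left _ _ _
    _ < r / 2 + r / 2 := add_lt_add hi hj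
  linarith

section

variable {𝕜 : Type*} [NormedDivisionRing 𝕜]

theorem norm_div_pow_le_one {u w : 𝕜} (h : ‖u‖ ≤ ‖w‖) (M : ℕ) : ‖(u / w) ^ M‖ ≤ 1 := by
  rw [norm_pow, norm_div]
  exact pow_le_one₀ (by positivity) (div_le_one_of_le₀ h (norm_nonneg w))

theorem norm_div_pow_le_of_half_le_norm {u w : 𝕜} {t : ℝ} (hu : ‖u‖ ≤ t) (hw : 1 / 2 ≤ ‖w‖)
    (M : ℕ) : ‖(u / w) ^ M‖ ≤ (2 * t) ^ M := by
  rw [norm_pow, norm_div]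
  refine pow_le_pow_left₀ (by positivity) ?_ M
  rw [div_le_iff₀ (by linarith)]
  nlinarith [norm_nonneg u]

end

theorem one_le_norm_intCast_add_intCast_mul_I {m n : ℤ} (h : m ≠ 0 ∨ n ≠ 0) :
    1 ≤ ‖(m : ℂ) + n * Complex.I‖ := by
  have hsq : (1 : ℝ) ≤ (m : ℝ) ^ 2 + (n : ℝ) ^ 2 := by
    rcases h with h | h
    · nlinarith [(one_le_sq_iff_one_le_abs (m : ℝ)).2 (by exact_mod_cast Int.one_le_abs h)]
    · nlinarith [(one_le_sq_iff_one_le_abs (n : ℝ)).2 (by exact_mod_cast Int.one_le_abs h)]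
  have hnorm : ‖(m : ℂ) + n * Complex.I‖ ^ 2 = (m : ℝ) ^ 2 + (n : ℝ) ^ 2 := by
    rw [Complex.sq_norm]
    exact_mod_cast Complex.normSq_add_mul_I m n
  nlinarith [norm_nonneg ((m : ℂ) + n * Complex.I)]

namespace Paper

theorem pairwise_one_le_dist_latA (N : ℕ) :
    Pairwise fun p q : ZN N => 1 ≤ dist (latA p) (latA q) := by
  intro p q hpq
  have hne : p.1.1 - q.1.1 ≠ 0 ∨ p.1.2 - q.1.2 ≠ 0 := by
    by_contra! h
    exact hpq (Subtype.ext (Prod.ext (by omega) (by omega)))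
  have hsub : latA p - latA q = ((p.1.1 - q.1.1 : ℤ) : ℂ) + ((p.1.2 - q.1.2 : ℤ) : ℂ) * Complex.I := by
    simp only [latA]
    push_cast
    ring
  rw [dist_eq_norm, hsub]
  exact one_le_norm_intCast_add_intCast_mul_I hne

theorem lattice_bound_off_disks_general (M N : ℕ) (α : ℝ)
    (bc : ZN N → ℝ)
    (hbc : ∀ p : ZN N, 0 < bc p ∧ bc p ≤ ‖latA p‖ ^ (-α))
    (hsum : Summable (fun p : ZN N => ‖latA p‖ ^ (-(α * M))))
    (hbound : (∑' p : ZN N, ‖latA p‖ ^ (-(α * M))) ≤ 1 / 2 ^ (M + 1))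
    (z : ℂ) (hz : ∀ p : ZN N, z ∉ Metric.ball (latA p) (bc p)) :
    ‖latF N M bc z‖ ≤ 2 := by
  have hnorm_bc : ∀ p, ‖(bc p : ℂ)‖ = bc p := fun p => by
    rw [Complex.norm_real, Real.norm_of_nonneg (hbc p).1.le]
  have hnear : ∀ p, ‖((bc p : ℂ) / (z - latA p)) ^ M‖ ≤ 1 := fun p => by
    refine norm_div_pow_le_one ?_ M
    rw [hnorm_bc]
    simpa [dist_eq_norm] using hz p
  have hfar : ∀ p, 1 / 2 ≤ dist z (latA p) →
      ‖((bc p : ℂ) / (z - latA p)) ^ M‖ ≤ 2 ^ M * ‖latA p‖ ^ (-(α * M)) := fun p hp => by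
    rw [← neg_mul, Real.rpow_mul_natCast (norm_nonneg _), ← mul_pow]
    exact norm_div_pow_le_of_half_le_norm ((hnorm_bc p).trans_le (hbc p).2)
      (by rwa [← dist_eq_norm]) M
  have hS := Metric.subsingleton_setOf_dist_lt_half (pairwise_one_le_dist_latA N) z
  calc ‖latF N M bc z‖ ≤ ∑' p, 2 ^ M * ‖latA p‖ ^ (-(α * M)) + 1 :=
        norm_tsum_le_tsum_add_one_of_subsingleton hS (hsum.mul_left _) (fun p _ => hnear p)
          (fun p hp => hfar p (not_lt.1 hp)) fun p => by positivity
    _ ≤ 2 ^ M * (1 / 2 ^ (M + 1)) + 1 := by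
        rw [tsum_mul_left]
        gcongr
    _ ≤ 2 := by
        rw [pow_succ]
        field_simp
        norm_num

/-- **Claim 7.3**: if `z` lies outside all the disks `D(a_{j,k}, b_{j,k})`, then `|f(z)| ≤ 2`. -/
theorem lattice_bound_off_disks (M N : ℕ) (hM : 1 ≤ M) (hN : 1 ≤ N) (α : ℝ)
    (hα : 2 / (M : ℝ) < α)
    (bc : ZN N → ℝ)
    (hbc : ∀ p : ZN N, 0 < bc p ∧ bc p ≤ ‖latA p‖ ^ (-α))
    (hsum : Summable (fun p : ZN N => ‖latA p‖ ^ (-(α * M))))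
    (hbound : (∑' p : ZN N, ‖latA p‖ ^ (-(α * M))) ≤ 1 / 2 ^ (M + 1))
    (z : ℂ) (hz : ∀ p : ZN N, z ∉ Metric.ball (latA p) (bc p)) :
    ‖latF N M bc z‖ ≤ 2 :=
  lattice_bound_off_disks_general M N α bc hbc hsum hbound z hz

end Paper
end
end

section
/- Let f(z) := ∑_{j ≥ 8} e^{-j}/(z − log j). Then: (i) for every z ∈ ℂ not belonging to any disk D(log j, e^{-j}), j ≥ 8, one has |f(z)| ≤ 2; (ii) for every j ≥ 8 and every z ∈ D(log j, e^{-j}) ∖ {log j} one has |f'(z)| ≥ e^8 − 1 > 0, so f has no critical points in these disks. -/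
open Filter Topology Set Metric
open scoped ENNReal

noncomputable section

namespace Paper

/-- Riemann sphere as one-point compactification of ℂ. -/
local notation "ℂ∞" => OnePoint ℂ

end Paper

namespace Paper

/-- The poles `log j`, `j ≥ 8` (indexed by `j : ℕ` via `j ↦ log (j + 8)`). -/
def logA (j : ℕ) : ℂ := (Real.log ((j : ℝ) + 8) : ℂ)

/-- The function `f(z) = ∑_{j ≥ 8} e^{-j} / (z - log j)`. -/
def logF (z : ℂ) : ℂ := ∑' j : ℕ, (Real.exp (-((j : ℝ) + 8)) : ℂ) / (z - logA j)

end Paper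

/-!
Write `f = ∑ c_j / (z - a_j)` with `a_j = log j`, `c_j = e^{-j}`, and let `r_j = 1/(3j)`.
Since `log (j + 1) - log j ≥ 1 / (j + 1)`, the disks `D(a_j, r_j)` are pairwise disjoint, so
every `z` lies in at most one of them, and for all other `k` we get
`|c_k / (z - a_k)| ≤ c_k / r_k ≤ c_k / r_k²` and `|c_k / (z - a_k)²| ≤ c_k / r_k² = 9 k² e^{-k}`;
consecutive terms of the last series have ratio at most `1/2`, so its sum over `k ≥ 8` is at
most `1`. Outside the disks `D(a_j, c_j)` the one exceptional term has modulus at most `1`,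
whence `|f| ≤ 2`. In `D(a_j, c_j) ⊆ D(a_j, r_j)` the derivative of the `j`-th term has modulus
at least `1 / c_j ≥ e⁸`, while the derivatives of all other terms add up to at most `1`.
-/

namespace Paper

theorem norm_div_le_div_of_le_norm {𝕜 : Type*} [NormedDivisionRing 𝕜] {a w : 𝕜} {r : ℝ}
    (hr : 0 < r) (hw : r ≤ ‖w‖) : ‖a / w‖ ≤ ‖a‖ / r := by
  rw [norm_div]
  exact div_le_div_of_nonneg_left (norm_nonneg a) hr hw

theorem hasDerivAt_const_div_sub {𝕜 : Type*} [NontriviallyNormedField 𝕜] (c a : 𝕜) {z : 𝕜}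
    (hz : z ≠ a) : HasDerivAt (fun w => c / (w - a)) (-(c / (z - a) ^ 2)) z := by
  have h := (((hasDerivAt_id z).sub_const a).inv (sub_ne_zero.2 hz)).const_mul c
  simpa [div_eq_mul_inv, neg_div] using h

theorem norm_tsum_le_add_tsum_of_forall_ne {ι E : Type*} [NormedAddCommGroup E] [DecidableEq ι]
    {f : ι → E} {g : ι → ℝ} {B : ℝ} (hg : Summable g) (j : ι) (hgj : 0 ≤ g j)
    (hfj : ‖f j‖ ≤ B) (hf : ∀ i ≠ j, ‖f i‖ ≤ g i) : ‖∑' i, f i‖ ≤ B + ∑' i, g i := by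
  refine tsum_of_norm_bounded ((hasSum_ite_eq j B).add hg.hasSum) fun i => ?_
  rcases eq_or_ne i j with rfl | hi
  · simpa using add_le_add hfj hgj
  · simpa [hi] using hf i hi

theorem summable_and_tsum_le_of_succ_le_mul {u : ℕ → ℝ} {ρ : ℝ} (hu : ∀ k, 0 ≤ u k)
    (hρ₀ : 0 ≤ ρ) (hρ : ρ < 1) (h : ∀ k, u (k + 1) ≤ ρ * u k) :
    Summable u ∧ ∑' k, u k ≤ u 0 / (1 - ρ) := by
  have hgeom : ∀ k, u k ≤ u 0 * ρ ^ k := by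
    intro k
    induction k with
    | zero => simp
    | succ k ih => calc
        u (k + 1) ≤ ρ * u k := h k
        _ ≤ ρ * (u 0 * ρ ^ k) := by gcongr
        _ = u 0 * ρ ^ (k + 1) := by ring
  have hs := (summable_geometric_of_lt_one hρ₀ hρ).mul_left (u 0)
  refine ⟨hs.of_nonneg_of_le hu hgeom, ?_⟩
  calc ∑' k, u k ≤ ∑' k, u 0 * ρ ^ k := (hs.of_nonneg_of_le hu hgeom).tsum_le_tsum hgeom hs
    _ = u 0 / (1 - ρ) := by
      rw [tsum_mul_left, tsum_geometric_of_lt_one hρ₀ hρ, div_eq_mul_inv]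

theorem inv_three_mul_add_inv_three_mul_le_log_sub_log {p q : ℝ} (hp : 1 ≤ p) (hq : p + 1 ≤ q) :
    (3 * p)⁻¹ + (3 * q)⁻¹ ≤ Real.log q - Real.log p := by
  have hp0 : 0 < p := by linarith
  have hq0 : 0 < q := by linarith
  have hlog : 1 - p / q ≤ Real.log q - Real.log p := by
    have := Real.one_sub_inv_le_log_of_pos (div_pos hq0 hp0)
    rwa [inv_div, Real.log_div hq0.ne' hp0.ne'] at this
  refine le_trans ?_ hlog
  rw [inv_eq_one_div, inv_eq_one_div, div_add_div _ _ (by positivity) (by positivity),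
    one_sub_div hq0.ne', div_le_div_iff₀ (by positivity) hq0]
  nlinarith [mul_nonneg (sub_nonneg.2 hq) (by linarith : (0 : ℝ) ≤ 3 * p - 1)]

/-- `logC k = e^{-j}` is the coefficient at the pole `logA k = log j` and `logR k = 1/(3j)` the
radius of its separation disk, where `j = k + 8`. -/
def logC (k : ℕ) : ℝ := Real.exp (-((k : ℝ) + 8))

def logR (k : ℕ) : ℝ := (3 * ((k : ℝ) + 8))⁻¹

theorem logC_pos (k : ℕ) : 0 < logC k := Real.exp_pos _

theorem logR_pos (k : ℕ) : 0 < logR k := by unfold logR; positivity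

theorem logR_le_one (k : ℕ) : logR k ≤ 1 := by
  unfold logR
  exact inv_le_one_of_one_le₀ (by linarith [(k.cast_nonneg : (0 : ℝ) ≤ k)])

theorem norm_logC (k : ℕ) : ‖(logC k : ℂ)‖ = logC k := by
  rw [Complex.norm_real, Real.norm_of_nonneg (logC_pos k).le]

theorem logC_mul_exp (k : ℕ) : logC k * Real.exp ((k : ℝ) + 8) = 1 := by
  rw [logC, ← Real.exp_add, neg_add_cancel, Real.exp_zero]

theorem logR_add_logR_le_norm_logA_sub {j k : ℕ} (h : j ≠ k) :
    logR j + logR k ≤ ‖logA j - logA k‖ := by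
  wlog hjk : j < k generalizing j k
  · rw [add_comm, norm_sub_rev]
    exact this h.symm (lt_of_le_of_ne (not_lt.1 hjk) h.symm)
  have hgap := inv_three_mul_add_inv_three_mul_le_log_sub_log
    (p := (j : ℝ) + 8) (q := (k : ℝ) + 8) (by linarith [(j.cast_nonneg : (0 : ℝ) ≤ j)])
    (by have : (j : ℝ) + 1 ≤ k := by exact_mod_cast hjk
        linarith)
  have hnorm : ‖logA j - logA k‖ = Real.log ((k : ℝ) + 8) - Real.log ((j : ℝ) + 8) := by
    rw [logA, logA, ← Complex.ofReal_sub, Complex.norm_real, Real.norm_eq_abs, abs_sub_comm,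
      abs_of_nonneg (le_trans (by positivity) hgap)]
  rw [hnorm]
  exact hgap

theorem logR_le_norm_sub_logA {j k : ℕ} (hkj : k ≠ j) {z : ℂ} (hz : z ∈ ball (logA j) (logR j)) :
    logR k ≤ ‖z - logA k‖ := by
  have hsep := logR_add_logR_le_norm_logA_sub hkj.symm
  have htri := norm_sub_le_norm_sub_add_norm_sub (logA j) z (logA k)
  rw [mem_ball_iff_norm'] at hz
  linarith

theorem exists_forall_ne_logR_le_norm_sub_logA (z : ℂ) :
    ∃ j, ∀ k ≠ j, logR k ≤ ‖z - logA k‖ := by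
  by_cases h : ∃ j, z ∈ ball (logA j) (logR j)
  · obtain ⟨j, hj⟩ := h
    exact ⟨j, fun k hk => logR_le_norm_sub_logA hk hj⟩
  · push Not at h
    exact ⟨0, fun k _ => by simpa [dist_eq_norm] using h k⟩

theorem logC_div_logR_sq (k : ℕ) : logC k / logR k ^ 2 = 9 * ((k : ℝ) + 8) ^ 2 * logC k := by
  rw [logR, inv_pow, div_inv_eq_mul]
  ring

theorem logC_div_logR_sq_succ_le (k : ℕ) :
    logC (k + 1) / logR (k + 1) ^ 2 ≤ 2⁻¹ * (logC k / logR k ^ 2) := by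
  have he : Real.exp (-1) ≤ 10 / 27 := by
    rw [Real.exp_neg, inv_le_comm₀ (Real.exp_pos 1) (by norm_num)]
    linarith [Real.exp_one_gt_d9]
  have hC : logC (k + 1) = logC k * Real.exp (-1) := by
    rw [logC, logC, ← Real.exp_add]
    push_cast
    ring_nf
  have hk : (0 : ℝ) ≤ k := k.cast_nonneg
  rw [logC_div_logR_sq, logC_div_logR_sq, hC]
  push_cast
  have hC0 := logC_pos k
  have hsq : ((k : ℝ) + 1 + 8) ^ 2 * (10 / 27) ≤ 2⁻¹ * ((k : ℝ) + 8) ^ 2 := by nlinarith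
  calc 9 * ((k : ℝ) + 1 + 8) ^ 2 * (logC k * Real.exp (-1))
      ≤ 9 * ((k : ℝ) + 1 + 8) ^ 2 * (logC k * (10 / 27)) := by gcongr
    _ ≤ 2⁻¹ * (9 * ((k : ℝ) + 8) ^ 2 * logC k) := by nlinarith

theorem summable_logC_div_logR_sq_and_tsum_le_one :
    Summable (fun k => logC k / logR k ^ 2) ∧ ∑' k, logC k / logR k ^ 2 ≤ 1 := by
  obtain ⟨hs, hle⟩ := summable_and_tsum_le_of_succ_le_mul
    (fun k => (div_pos (logC_pos k) (pow_pos (logR_pos k) 2)).le) (by norm_num) (by norm_num)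
    logC_div_logR_sq_succ_le
  refine ⟨hs, hle.trans ?_⟩
  have h8 : (1152 : ℝ) ≤ Real.exp 8 := by
    have : (2.7 : ℝ) ^ 8 ≤ Real.exp 1 ^ 8 := by
      gcongr
      linarith [Real.exp_one_gt_d9]
    rw [← Real.exp_nat_mul] at this
    norm_num at this
    linarith
  have h1 := logC_mul_exp 0
  rw [logC_div_logR_sq]
  norm_num at h1 ⊢
  nlinarith [logC_pos 0]

theorem norm_logC_div_sub_logA_le {k : ℕ} {z : ℂ} (hz : logR k ≤ ‖z - logA k‖) :
    ‖(logC k : ℂ) / (z - logA k)‖ ≤ logC k / logR k ^ 2 := by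
  calc ‖(logC k : ℂ) / (z - logA k)‖ ≤ logC k / logR k := by
        simpa only [norm_logC] using
          norm_div_le_div_of_le_norm (a := (logC k : ℂ)) (logR_pos k) hz
    _ ≤ logC k / logR k ^ 2 := by
        gcongr
        · exact (logC_pos k).le
        · exact pow_pos (logR_pos k) 2
        · exact pow_le_of_le_one (logR_pos k).le (logR_le_one k) two_ne_zero

theorem norm_logC_div_sub_logA_sq_le {k : ℕ} {z : ℂ} (hz : logR k ≤ ‖z - logA k‖) :
    ‖(logC k : ℂ) / (z - logA k) ^ 2‖ ≤ logC k / logR k ^ 2 := by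
  have hsq : logR k ^ 2 ≤ ‖(z - logA k) ^ 2‖ := by
    rw [norm_pow]
    gcongr
    exact (logR_pos k).le
  simpa only [norm_logC] using
    norm_div_le_div_of_le_norm (a := (logC k : ℂ)) (pow_pos (logR_pos k) 2) hsq

theorem norm_logF_le_two {z : ℂ} (hz : ∀ j, logC j ≤ ‖z - logA j‖) : ‖logF z‖ ≤ 2 := by
  obtain ⟨j, hj⟩ := exists_forall_ne_logR_le_norm_sub_logA z
  obtain ⟨hs, hle⟩ := summable_logC_div_logR_sq_and_tsum_le_one
  have hfj : ‖(logC j : ℂ) / (z - logA j)‖ ≤ 1 := by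
    simpa only [norm_logC, div_self (logC_pos j).ne'] using
      norm_div_le_div_of_le_norm (a := (logC j : ℂ)) (logC_pos j) (hz j)
  calc ‖logF z‖ ≤ 1 + ∑' k, logC k / logR k ^ 2 :=
        norm_tsum_le_add_tsum_of_forall_ne hs j (div_pos (logC_pos j) (pow_pos (logR_pos j) 2)).le
          hfj fun k hk => norm_logC_div_sub_logA_le (hj k hk)
    _ ≤ 2 := by linarith

theorem norm_ite_logC_div_sub_logA_le {j k : ℕ} {z : ℂ} (hz : z ∈ ball (logA j) (logR j)) :
    ‖if k = j then 0 else (logC k : ℂ) / (z - logA k)‖ ≤ logC k / logR k ^ 2 := by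
  split_ifs with hk
  · rw [norm_zero]
    exact (div_pos (logC_pos k) (pow_pos (logR_pos k) 2)).le
  · exact norm_logC_div_sub_logA_le (logR_le_norm_sub_logA hk hz)

theorem norm_ite_logC_div_sub_logA_sq_le {j k : ℕ} {z : ℂ} (hz : z ∈ ball (logA j) (logR j)) :
    ‖if k = j then 0 else -((logC k : ℂ) / (z - logA k) ^ 2)‖ ≤ logC k / logR k ^ 2 := by
  split_ifs with hk
  · rw [norm_zero]
    exact (div_pos (logC_pos k) (pow_pos (logR_pos k) 2)).le
  · rw [norm_neg]
    exact norm_logC_div_sub_logA_sq_le (logR_le_norm_sub_logA hk hz)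

def logFTail (j : ℕ) (z : ℂ) : ℂ := ∑' k, if k = j then 0 else (logC k : ℂ) / (z - logA k)

theorem logF_eq_add_logFTail {j : ℕ} {z : ℂ} (hz : z ∈ ball (logA j) (logR j)) :
    logF z = (logC j : ℂ) / (z - logA j) + logFTail j z := by
  obtain ⟨hs, -⟩ := summable_logC_div_logR_sq_and_tsum_le_one
  refine (Summable.of_norm_bounded_eventually hs ?_).tsum_eq_add_tsum_ite j
  filter_upwards [eventually_cofinite_ne j] with k hk
  exact norm_logC_div_sub_logA_le (logR_le_norm_sub_logA hk hz)

theorem hasDerivAt_logFTail {j : ℕ} {z : ℂ} (hz : z ∈ ball (logA j) (logR j)) :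
    HasDerivAt (logFTail j)
      (∑' k, if k = j then 0 else -((logC k : ℂ) / (z - logA k) ^ 2)) z := by
  obtain ⟨hs, -⟩ := summable_logC_div_logR_sq_and_tsum_le_one
  have hderiv : ∀ k, ∀ w ∈ ball (logA j) (logR j),
      HasDerivAt (fun w => if k = j then 0 else (logC k : ℂ) / (w - logA k))
        (if k = j then 0 else -((logC k : ℂ) / (w - logA k) ^ 2)) w := by
    intro k w hw
    rcases eq_or_ne k j with rfl | hk
    · simpa using hasDerivAt_const w (0 : ℂ)
    · have hne : w ≠ logA k := fun h => by
        simpa [h] using (logR_pos k).trans_le (logR_le_norm_sub_logA hk hw)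
      simpa [hk] using hasDerivAt_const_div_sub (logC k : ℂ) (logA k) hne
  exact hasDerivAt_tsum_of_isPreconnected hs isOpen_ball (convex_ball _ _).isPreconnected hderiv
    (fun k w hw => norm_ite_logC_div_sub_logA_sq_le hw) hz
    (Summable.of_norm_bounded hs fun k => norm_ite_logC_div_sub_logA_le hz) hz

theorem logC_le_logR (k : ℕ) : logC k ≤ logR k := by
  obtain ⟨hs, hle⟩ := summable_logC_div_logR_sq_and_tsum_le_one
  have hk : logC k / logR k ^ 2 ≤ 1 :=
    (hs.le_tsum k fun i _ => (div_pos (logC_pos i) (pow_pos (logR_pos i) 2)).le).trans hle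
  rw [div_le_one (pow_pos (logR_pos k) 2)] at hk
  exact hk.trans (pow_le_of_le_one (logR_pos k).le (logR_le_one k) two_ne_zero)

theorem exp_eight_le_norm_logC_div_sub_logA_sq {j : ℕ} {z : ℂ}
    (hz : z ∈ ball (logA j) (logC j)) (hzj : z ≠ logA j) :
    Real.exp 8 ≤ ‖(logC j : ℂ) / (z - logA j) ^ 2‖ := by
  have h0 : 0 < ‖z - logA j‖ := norm_pos_iff.2 (sub_ne_zero.2 hzj)
  have hlt : ‖z - logA j‖ < logC j := mem_ball_iff_norm.1 hz
  rw [norm_div, norm_logC, norm_pow, le_div_iff₀ (by positivity)]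
  calc Real.exp 8 * ‖z - logA j‖ ^ 2 ≤ Real.exp ((j : ℝ) + 8) * logC j ^ 2 := by
        gcongr
        linarith [(j.cast_nonneg : (0 : ℝ) ≤ j)]
    _ = logC j := by linear_combination logC j * logC_mul_exp j

theorem exp_eight_sub_one_le_norm_deriv_logF {j : ℕ} {z : ℂ}
    (hz : z ∈ ball (logA j) (logC j)) (hzj : z ≠ logA j) :
    Real.exp 8 - 1 ≤ ‖deriv logF z‖ := by
  obtain ⟨hs, hle⟩ := summable_logC_div_logR_sq_and_tsum_le_one
  have hzR : z ∈ ball (logA j) (logR j) := ball_subset_ball (logC_le_logR j) hz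
  have hderiv := ((hasDerivAt_const_div_sub (logC j : ℂ) (logA j) hzj).add
    (hasDerivAt_logFTail hzR)).congr_of_eventuallyEq
    (eventually_of_mem (isOpen_ball.mem_nhds hzR) fun w hw => logF_eq_add_logFTail hw)
  set D := ∑' k, if k = j then 0 else -((logC k : ℂ) / (z - logA k) ^ 2)
  have htail : ‖D‖ ≤ 1 :=
    (tsum_of_norm_bounded hs.hasSum fun k => norm_ite_logC_div_sub_logA_sq_le hzR).trans hle
  rw [hderiv.deriv]
  calc Real.exp 8 - 1 ≤ ‖-((logC j : ℂ) / (z - logA j) ^ 2)‖ - ‖D‖ := by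
        rw [norm_neg]
        linarith [exp_eight_le_norm_logC_div_sub_logA_sq hz hzj]
    _ ≤ ‖-((logC j : ℂ) / (z - logA j) ^ 2) + D‖ := norm_sub_le_norm_add _ _

/-- Estimates from the proof of Theorem 7.4: (i) `|f(z)| ≤ 2` for `z` outside all the disks
`D(log j, e^{-j})`; (ii) `|f'(z)| ≥ e⁸ − 1 > 0` on each punctured disk
`D(log j, e^{-j}) ∖ {log j}`, so `f` has no critical points in these disks. -/
theorem infinite_order_example_estimates :
    (∀ z : ℂ, (∀ j : ℕ, z ∉ Metric.ball (logA j) (Real.exp (-((j : ℝ) + 8)))) →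
        ‖logF z‖ ≤ 2)
      ∧ 0 < Real.exp 8 - 1
      ∧ (∀ j : ℕ, ∀ z ∈ Metric.ball (logA j) (Real.exp (-((j : ℝ) + 8))) \ {logA j},
          Real.exp 8 - 1 ≤ ‖deriv logF z‖ ∧ deriv logF z ≠ 0) := by
  have h8 : 0 < Real.exp 8 - 1 := sub_pos.2 (Real.one_lt_exp_iff.2 (by norm_num))
  refine ⟨fun z hz => norm_logF_le_two fun j => ?_, h8, fun j z hz => ?_⟩
  · exact not_lt.1 (mt mem_ball_iff_norm.2 (hz j))
  · have hle := exp_eight_sub_one_le_norm_deriv_logF hz.1 hz.2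
    exact ⟨hle, norm_pos_iff.1 (h8.trans_le hle)⟩

end Paper
end
end

section
/- Let (a_j)_{j≥1} be a sequence in ℂ ∖ {0} with |a_j| → ∞, let (b_j)_{j≥1} be nonzero complex numbers, and let m_j be positive integers with m_j ≤ M := limsup_j m_j < ∞ (so that infinitely many j satisfy m_j = M). Let δ be the critical exponent of ∑_j (|b_j|/|a_j|^{1+1/M})^t. Then there exists α ∈ ℝ such that the open cone C := exp({z ∈ ℂ : α < Im z < α + 3π/2}) satisfies: ∑_{j : a_j ∈ C} (|b_j|/|a_j|^{1+1/M})^t = ∞ for every t with 0 ≤ t < δ, and the set {j : a_j ∈ C and m_j = M} is infinite. -/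
open Filter Topology Set Metric
open scoped ENNReal

noncomputable section

namespace Paper

/-- Riemann sphere as one-point compactification of ℂ. -/
local notation "ℂ∞" => OnePoint ℂ

end Paper

namespace Paper

/-- The cone `C(α₁, α₂) = exp {z : α₁ < Im z < α₂}`. -/
def cone (α₁ α₂ : ℝ) : Set ℂ :=
  (fun z : ℂ => Complex.exp z) '' {z : ℂ | α₁ < z.im ∧ z.im < α₂}

/-!
The five cones `C(α_k, α_k + 3π/2)`, `α_k = -π + 2πk/5`, together cover every nonzero point
at least three times. Call a set of indices small if it contains only finitely many `j` with
`m_j = M`, resp. if `∑ (|b_j|/|a_j|^{1+1/M})^t` converges over it for some `t < δ`. Both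
notions are closed under finite unions and `ℕ` is not small, so at most two of the five cones
are small in either sense, and some cone is small in neither. Small sets are encoded as
complements of members of a proper filter.
-/

section SummableComplFilter

variable {ι E : Type*} [AddCommGroup E] [UniformSpace E] [IsUniformAddGroup E] [CompleteSpace E]

lemma summable_subtype_union {f : ι → E} {s t : Set ι} (hs : Summable fun j : s => f j)
    (ht : Summable fun j : t => f j) : Summable fun j : ↥(s ∪ t) => f j := by
  have hst : Summable fun j : ↥(s ∩ t) => f j :=
    hs.comp_injective (Set.inclusion_injective Set.inter_subset_left)
  refine summable_subtype_iff_indicator.mpr ?_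
  rw [eq_sub_of_add_eq (Set.indicator_union_add_inter f s t)]
  exact ((summable_subtype_iff_indicator.mp hs).add (summable_subtype_iff_indicator.mp ht)).sub
    (summable_subtype_iff_indicator.mp hst)

def summableComplFilter (f : ι → E) : Filter ι :=
  Filter.comk (fun s => Summable fun j : s => f j) (by simp)
    (fun _ ht _ hst => ht.comp_injective (Set.inclusion_injective hst))
    (fun _ hs _ ht => summable_subtype_union hs ht)

lemma compl_mem_summableComplFilter {f : ι → E} {s : Set ι} :
    sᶜ ∈ summableComplFilter f ↔ Summable fun j : s => f j :=
  Filter.compl_mem_comk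

lemma summableComplFilter_neBot {f : ι → E} (hf : ¬Summable f) :
    (summableComplFilter f).NeBot := by
  refine ⟨fun h => hf ?_⟩
  have : (Set.univ : Set ι)ᶜ ∈ summableComplFilter f := by simp [h]
  simpa using summable_subtype_iff_indicator.mp (compl_mem_summableComplFilter.mp this)

end SummableComplFilter

section CritExp

variable {ι : Type*} {c : ι → ℝ}

lemma summable_rpow_of_le (hc : ∀ j, 0 ≤ c j) {t t' : ℝ} (ht : 0 ≤ t) (htt' : t ≤ t')
    (hs : Summable fun j => c j ^ t) : Summable fun j => c j ^ t' := by
  refine Summable.of_norm_bounded_eventually hs ?_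
  filter_upwards [hs.tendsto_cofinite_zero.eventually_lt_const one_pos] with j hj
  have hc1 : c j ≤ 1 := by
    by_contra! h
    exact (Real.one_le_rpow h.le ht).not_gt hj
  rw [Real.norm_of_nonneg (Real.rpow_nonneg (hc j) _)]
  exact Real.rpow_le_rpow_of_exponent_ge' (hc j) hc1 ht htt'

lemma summableComplFilter_rpow_le (hc : ∀ j, 0 ≤ c j) {t t' : ℝ} (ht : 0 ≤ t) (htt' : t ≤ t') :
    summableComplFilter (fun j => c j ^ t') ≤ summableComplFilter fun j => c j ^ t := by
  intro s hs
  rw [← compl_compl s, compl_mem_summableComplFilter] at hs ⊢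
  exact summable_rpow_of_le (c := fun j : ↥sᶜ => c j) (fun j => hc j) ht htt' hs

lemma not_summable_of_lt_critExp {t : ℝ} (ht : 0 ≤ t) (htδ : ENNReal.ofReal t < critExp c) :
    ¬Summable fun j => c j ^ t :=
  fun hs => htδ.not_ge (sInf_le ⟨t, ⟨ht, hs⟩, rfl⟩)

def critExpFilter (c : ι → ℝ) : Filter ι :=
  ⨅ t : {t : ℝ // 0 ≤ t ∧ ENNReal.ofReal t < critExp c}, summableComplFilter fun j => c j ^ t.1

lemma critExpFilter_neBot [Nonempty ι] (hc : ∀ j, 0 ≤ c j) : (critExpFilter c).NeBot := by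
  refine Filter.iInf_neBot_of_directed (fun t t' => ⟨⟨max t.1 t'.1, ?_, ?_⟩, ?_, ?_⟩)
    fun t => summableComplFilter_neBot (not_summable_of_lt_critExp t.2.1 t.2.2)
  · exact t.2.1.trans (le_max_left _ _)
  · rw [ENNReal.ofReal_max]
    exact max_lt t.2.2 t'.2.2
  · exact summableComplFilter_rpow_le hc t.2.1 (le_max_left _ _)
  · exact summableComplFilter_rpow_le hc t'.2.1 (le_max_right _ _)

lemma not_summable_of_frequently_critExpFilter {s : Set ι} (h : ∃ᶠ j in critExpFilter c, j ∈ s)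
    {t : ℝ} (ht : 0 ≤ t) (htδ : ENNReal.ofReal t < critExp c) :
    ¬Summable fun j : s => c j ^ t := fun hs =>
  h (Filter.mem_iInf_of_mem (⟨t, ht, htδ⟩ : {t : ℝ // 0 ≤ t ∧ ENNReal.ofReal t < critExp c})
    (compl_mem_summableComplFilter.mpr hs))

end CritExp

section Covering

variable {ι α : Type*} {s : ι → Set α} {T : Finset ι} {r : ℕ}

open Classical in
lemma card_filter_eventually_notMem_le (l : Filter α) [l.NeBot]
    (hcover : ∀ x, T.card ≤ r + (T.filter (x ∈ s ·)).card) :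
    (T.filter fun k => ∀ᶠ x in l, x ∉ s k).card ≤ r := by
  set B := T.filter fun k => ∀ᶠ x in l, x ∉ s k
  obtain ⟨x, hx⟩ := (B.eventually_all.2 fun k hk => (Finset.mem_filter.1 hk).2).exists
  have hdisj : Disjoint B (T.filter (x ∈ s ·)) :=
    Finset.disjoint_left.2 fun k hkB hkx => hx k hkB (Finset.mem_filter.1 hkx).2
  have := calc
    B.card + (T.filter (x ∈ s ·)).card = (B ∪ T.filter (x ∈ s ·)).card :=
      (Finset.card_union_of_disjoint hdisj).symm
    _ ≤ T.card := Finset.card_le_card (Finset.union_subset (Finset.filter_subset _ T)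
      (Finset.filter_subset _ T))
    _ ≤ r + (T.filter (x ∈ s ·)).card := hcover x
  omega

open Classical in
lemma exists_frequently_frequently_of_card_filter_notMem_le (l₁ l₂ : Filter α) [l₁.NeBot]
    [l₂.NeBot] (hcover : ∀ x, T.card ≤ r + (T.filter (x ∈ s ·)).card) (hT : 2 * r < T.card) :
    ∃ k ∈ T, (∃ᶠ x in l₁, x ∈ s k) ∧ ∃ᶠ x in l₂, x ∈ s k := by
  have h₁ := card_filter_eventually_notMem_le l₁ hcover
  have h₂ := card_filter_eventually_notMem_le l₂ hcover
  obtain ⟨k, hkT, hk⟩ := Finset.exists_mem_notMem_of_card_lt_card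
    (s := (T.filter fun k => ∀ᶠ x in l₁, x ∉ s k) ∪ T.filter fun k => ∀ᶠ x in l₂, x ∉ s k)
    (t := T) ((Finset.card_union_le _ _).trans_lt (by omega))
  simp only [Finset.mem_union, Finset.mem_filter, hkT, true_and, not_or] at hk
  exact ⟨k, hkT, hk⟩

end Covering

open Real

lemma mem_cone_of_arg_add {z : ℂ} (hz : z ≠ 0) {α β : ℝ} (n : ℤ)
    (h : α < z.arg + 2 * π * n ∧ z.arg + 2 * π * n < β) : z ∈ cone α β := by
  refine ⟨Complex.log z + n * (2 * π * Complex.I), ?_, ?_⟩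
  · simpa [Complex.log_im, mul_comm] using h
  · simp only [Complex.exp_add, Complex.exp_int_mul_two_pi_mul_I, mul_one, Complex.exp_log hz]

def coneStart (k : ℕ) : ℝ := -π + 2 * π * k / 5

open Classical in
lemma three_le_card_filter_mem_cone {z : ℂ} (hz : z ≠ 0) :
    3 ≤ ((Finset.range 5).filter
      fun k => z ∈ cone (coneStart k) (coneStart k + 3 * π / 2)).card := by
  set T := (Finset.range 5).filter fun k => z ∈ cone (coneStart k) (coneStart k + 3 * π / 2)
  have hmem (k : ℕ) (n : ℤ) (h₁ : coneStart k < z.arg + 2 * π * n)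
      (h₂ : z.arg + 2 * π * n < coneStart k + 3 * π / 2) (hk : k < 5 := by norm_num) : k ∈ T :=
    Finset.mem_filter.2 ⟨Finset.mem_range.2 hk, mem_cone_of_arg_add hz n ⟨h₁, h₂⟩⟩
  have := z.neg_pi_lt_arg; have := z.arg_le_pi; have := pi_pos
  -- an argument in `(-π + 2π i/5, -π + 2π (i+1)/5]` lies in the cones `i`, `i - 1`, `i - 2` (mod 5)
  rcases le_or_gt z.arg (-(3 * π / 5)) with h₁ | h₁
  · refine Finset.two_lt_card.2
      ⟨0, hmem 0 0 ?_ ?_, 3, hmem 3 1 ?_ ?_, 4, hmem 4 1 ?_ ?_, by decide⟩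
      <;> simp only [coneStart] <;> push_cast <;> linarith
  rcases le_or_gt z.arg (-(π / 5)) with h₂ | h₂
  · refine Finset.two_lt_card.2
      ⟨0, hmem 0 0 ?_ ?_, 1, hmem 1 0 ?_ ?_, 4, hmem 4 1 ?_ ?_, by decide⟩
      <;> simp only [coneStart] <;> push_cast <;> linarith
  rcases le_or_gt z.arg (π / 5) with h₃ | h₃
  · refine Finset.two_lt_card.2
      ⟨0, hmem 0 0 ?_ ?_, 1, hmem 1 0 ?_ ?_, 2, hmem 2 0 ?_ ?_, by decide⟩
      <;> simp only [coneStart] <;> push_cast <;> linarith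
  rcases le_or_gt z.arg (3 * π / 5) with h₄ | h₄
  · refine Finset.two_lt_card.2
      ⟨1, hmem 1 0 ?_ ?_, 2, hmem 2 0 ?_ ?_, 3, hmem 3 0 ?_ ?_, by decide⟩
      <;> simp only [coneStart] <;> push_cast <;> linarith
  · refine Finset.two_lt_card.2
      ⟨2, hmem 2 0 ?_ ?_, 3, hmem 3 0 ?_ ?_, 4, hmem 4 0 ?_ ?_, by decide⟩
      <;> simp only [coneStart] <;> push_cast <;> linarith

theorem cone_lemma_general (a : ℕ → ℂ) (b : ℕ → ℂ) (m : ℕ → ℕ) (M : ℕ)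
    (ha0 : ∀ j, a j ≠ 0)
    (hattain : {j : ℕ | m j = M}.Infinite) :
    ∃ α : ℝ,
      (∀ t : ℝ, 0 ≤ t →
        ENNReal.ofReal t < critExp (fun j : ℕ => ‖b j‖ / ‖a j‖ ^ (1 + 1 / (M : ℝ))) →
        ¬ Summable (fun j : {j : ℕ // a j ∈ cone α (α + 3 * Real.pi / 2)} =>
            (‖b j.1‖ / ‖a j.1‖ ^ (1 + 1 / (M : ℝ))) ^ t))
      ∧ {j : ℕ | a j ∈ cone α (α + 3 * Real.pi / 2) ∧ m j = M}.Infinite := by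
  set c : ℕ → ℝ := fun j => ‖b j‖ / ‖a j‖ ^ (1 + 1 / (M : ℝ))
  have : (critExpFilter c).NeBot := critExpFilter_neBot fun j => by positivity
  have : (cofinite ⊓ 𝓟 {j | m j = M}).NeBot := hattain.cofinite_inf_principal_neBot
  obtain ⟨k, -, hδ, hM⟩ := exists_frequently_frequently_of_card_filter_notMem_le
    (critExpFilter c) (cofinite ⊓ 𝓟 {j | m j = M})
    (s := fun k => a ⁻¹' cone (coneStart k) (coneStart k + 3 * π / 2)) (T := Finset.range 5)
    (fun j => Nat.add_le_add_left (three_le_card_filter_mem_cone (ha0 j)) 2) (by simp)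
  refine ⟨coneStart k, fun t ht htδ => not_summable_of_frequently_critExpFilter hδ ht htδ, ?_⟩
  exact frequently_cofinite_iff_infinite.1 <|
    (frequently_inf_principal.1 hM).mono fun j hj => hj.symm

/-- **Lemma 5.1**: there is a cone of opening `3π/2` in which the series
`∑_{a_j ∈ C} (|b_j|/|a_j|^{1+1/M})^t` diverges for every `0 ≤ t < δ` and which contains
infinitely many poles of maximal multiplicity `M`. -/
theorem cone_lemma (a : ℕ → ℂ) (b : ℕ → ℂ) (m : ℕ → ℕ) (M : ℕ)
    (ha0 : ∀ j, a j ≠ 0)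
    (hacc : Tendsto (fun j : ℕ => ‖a j‖) atTop atTop)
    (hb : ∀ j, b j ≠ 0)
    (hm : ∀ j, 1 ≤ m j)
    (hle : ∀ j, m j ≤ M)
    (hattain : {j : ℕ | m j = M}.Infinite) :
    ∃ α : ℝ,
      (∀ t : ℝ, 0 ≤ t →
        ENNReal.ofReal t < critExp (fun j : ℕ => ‖b j‖ / ‖a j‖ ^ (1 + 1 / (M : ℝ))) →
        ¬ Summable (fun j : {j : ℕ // a j ∈ cone α (α + 3 * Real.pi / 2)} =>
            (‖b j.1‖ / ‖a j.1‖ ^ (1 + 1 / (M : ℝ))) ^ t))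
      ∧ {j : ℕ | a j ∈ cone α (α + 3 * Real.pi / 2) ∧ m j = M}.Infinite :=
  cone_lemma_general a b m M ha0 hattain

end Paper
end
end
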